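/- Let C ⊆ ℝ² be a convex set with nonempty interior and let p ∈ C be a boundary point of C (i.e. p ∈ C but p is not in the interior of C). Then σ(I(C,p)) + σ(E(C,p)) = π, where σ denotes the 1-dimensional Hausdorff measure on the unit circle. (That is, in the plane the internal and external angles at a boundary point of a convex set always sum to π.) -/

import Mathlib

open MeasureTheory RealInnerProductSpace

/-- The internal angle set of a convex set `C ⊆ ℝ²` at a point `p`. -/
def internalAngleSet (C : Set (EuclideanSpace ℝ (Fin 2)))
    (p : EuclideanSpace ℝ (Fin 2)) : Set (EuclideanSpace ℝ (Fin 2)) :=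
  {u | ‖u‖ = 1 ∧ ∃ t : ℝ, 0 < t ∧ p + t • u ∈ C}

/-- The external angle set of a convex set `C ⊆ ℝ²` at a point `p`. -/
def externalAngleSet (C : Set (EuclideanSpace ℝ (Fin 2)))
    (p : EuclideanSpace ℝ (Fin 2)) : Set (EuclideanSpace ℝ (Fin 2)) :=
  {u | ‖u‖ = 1 ∧ ∀ x ∈ C, ⟪u, x - p⟫ ≤ 0}

/-!
Parametrize the unit circle by `circ θ = (cos θ, sin θ)`. An arc `circ '' [a, b]` with
`b - a < 2π` has length `b - a`: it is at most that since `circ` is `1`-Lipschitz, and at least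
the sum of the chords of `n` equal subarcs, which tends to `b - a`.

A supporting line of `C` at `p` puts the internal directions into a closed half-circle, where,
by convexity, their angles form an interval `T` with endpoints `α ≤ β`, `β - α ≤ π`. The external
directions are those at an obtuse angle with all of `T`, which is the arc
`[β + π/2, α + 3π/2]` of length `π - (β - α)`.
-/

open Real Set Function

noncomputable def circ (θ : ℝ) : EuclideanSpace ℝ (Fin 2) := !₂[cos θ, sin θ]

lemma inner_circ_circ (θ φ : ℝ) : ⟪circ θ, circ φ⟫ = cos (θ - φ) := by
  simp only [circ, PiLp.inner_apply, RCLike.inner_apply, ringHom_apply, Fin.sum_univ_two,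
    Fin.isValue, Matrix.cons_val_zero, Matrix.cons_val_one, Matrix.cons_val_fin_one, cos_sub]
  ring

lemma norm_circ (θ : ℝ) : ‖circ θ‖ = 1 := by
  simp [circ, EuclideanSpace.norm_eq, Fin.sum_univ_two]

lemma dist_circ_circ (θ φ : ℝ) : dist (circ θ) (circ φ) = 2 * |sin ((θ - φ) / 2)| := by
  have hcos : cos (θ - φ) = 1 - 2 * sin ((θ - φ) / 2) ^ 2 := by
    have h := cos_two_mul ((θ - φ) / 2)
    rw [mul_div_cancel₀ _ two_ne_zero] at h
    linear_combination h + 2 * sin_sq_add_cos_sq ((θ - φ) / 2)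
  have h : ‖circ θ - circ φ‖ ^ 2 = (2 * |sin ((θ - φ) / 2)|) ^ 2 := by
    rw [← real_inner_self_eq_norm_sq, inner_sub_sub_self]
    simp only [inner_circ_circ, sub_self, cos_zero, ← neg_sub θ φ, cos_neg, hcos, mul_pow, sq_abs]
    ring
  rw [dist_eq_norm]
  exact (pow_left_inj₀ (norm_nonneg _) (by positivity) two_ne_zero).1 h

lemma lipschitzWith_circ : LipschitzWith 1 circ :=
  LipschitzWith.of_dist_le_mul fun θ φ => by
    rw [dist_circ_circ, NNReal.coe_one, one_mul, Real.dist_eq]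
    linarith [abs_sin_le_abs (x := (θ - φ) / 2), abs_div (θ - φ) (2:ℝ), abs_two (α := ℝ)]

lemma periodic_circ : Periodic circ (2 * π) := fun θ => by simp [circ]

lemma injOn_circ_Icc {a b : ℝ} (h : b - a < 2 * π) : InjOn circ (Icc a b) := by
  intro θ hθ φ hφ he
  have h1 : cos (θ - φ) = 1 := by
    rw [← inner_circ_circ, he, real_inner_self_eq_norm_sq, norm_circ, one_pow]
  rw [cos_eq_one_iff_of_lt_of_lt (by linarith [hθ.1, hφ.2]) (by linarith [hθ.2, hφ.1])] at h1
  linarith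

lemma range_circ : range circ = Metric.sphere 0 1 := by
  ext u
  simp only [mem_range, mem_sphere_iff_norm, sub_zero]
  constructor
  · rintro ⟨θ, rfl⟩; exact norm_circ θ
  · intro hu
    obtain ⟨θ, hθ⟩ := (Complex.norm_eq_one_iff ⟨u 0, u 1⟩).1 (by
      rw [Complex.norm_eq_sqrt_sq_add_sq, ← hu, EuclideanSpace.norm_eq, Fin.sum_univ_two]
      simp)
    refine ⟨θ, ?_⟩
    ext i; fin_cases i
    · simpa [circ] using congrArg Complex.re hθ
    · simpa [circ] using congrArg Complex.im hθ

lemma ofReal_dist_le_hausdorffMeasure {X : Type*} [MetricSpace X] [MeasurableSpace X]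
    [BorelSpace X] {s : Set X} (hs : IsPreconnected s) {x y : X} (hx : x ∈ s) (hy : y ∈ s) :
    ENNReal.ofReal (dist x y) ≤ μH[1] s := by
  have hdist : LipschitzWith 1 (dist x) := LipschitzWith.dist_right x
  have hIcc : Icc 0 (dist x y) ⊆ dist x '' s :=
    (hs.image _ hdist.continuous.continuousOn).Icc_subset ⟨x, hx, dist_self x⟩ ⟨y, hy, rfl⟩
  calc ENNReal.ofReal (dist x y) = μH[1] (Icc 0 (dist x y)) := by
        rw [hausdorffMeasure_real, volume_Icc, sub_zero]
    _ ≤ μH[1] (dist x '' s) := measure_mono hIcc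
    _ ≤ μH[1] s := by simpa using hdist.hausdorffMeasure_image_le zero_le_one s

lemma hausdorffMeasure_circ_image_Icc_add {a b c : ℝ} (hab : a ≤ b) (hbc : b ≤ c)
    (hca : c - a < 2 * π) :
    μH[1] (circ '' Icc a b) + μH[1] (circ '' Icc b c) = μH[1] (circ '' Icc a c) := by
  have := Measure.nullSingletonClass_hausdorff (EuclideanSpace ℝ (Fin 2)) one_pos
  have hinter : circ '' Icc a b ∩ circ '' Icc b c = {circ b} := by
    rw [← (injOn_circ_Icc hca).image_inter (Icc_subset_Icc_right hbc)
      (Icc_subset_Icc_left hab), Icc_inter_Icc_eq_singleton hab hbc, image_singleton]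
  rw [← measure_union_add_inter _
      (isCompact_Icc.image lipschitzWith_circ.continuous).measurableSet, hinter,
    measure_singleton, add_zero, ← image_union, Icc_union_Icc_eq_Icc hab hbc]

lemma sub_cube_le_hausdorffMeasure_circ_image_Icc (a : ℝ) {h : ℝ} (hh : 0 ≤ h) :
    ENNReal.ofReal (h - h ^ 3 / 24) ≤ μH[1] (circ '' Icc a (a + h)) := by
  rcases hh.eq_or_lt with rfl | hpos
  · simp
  have hchord : h - h ^ 3 / 24 ≤ dist (circ (a + h)) (circ a) := by
    rw [dist_circ_circ, add_sub_cancel_left]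
    linarith [sin_gt_sub_cube (half_pos hpos), le_abs_self (sin (h / 2))]
  refine (ENNReal.ofReal_le_ofReal hchord).trans (ofReal_dist_le_hausdorffMeasure
    (isPreconnected_Icc.image _ lipschitzWith_circ.continuous.continuousOn)
    (mem_image_of_mem _ (right_mem_Icc.2 (by linarith)))
    (mem_image_of_mem _ (left_mem_Icc.2 (by linarith))))

lemma nat_mul_sub_cube_le_hausdorffMeasure_circ_image_Icc (a : ℝ) {h : ℝ} (hh : 0 ≤ h)
    (n : ℕ) (hn : n * h < 2 * π) :
    ENNReal.ofReal (n * (h - h ^ 3 / 24)) ≤ μH[1] (circ '' Icc a (a + n * h)) := by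
  induction n with
  | zero => simp
  | succ n ih =>
    push_cast at hn ⊢
    have hnh : n * h < 2 * π := by nlinarith
    calc ENNReal.ofReal ((n + 1) * (h - h ^ 3 / 24))
        ≤ ENNReal.ofReal (n * (h - h ^ 3 / 24)) + ENNReal.ofReal (h - h ^ 3 / 24) := by
          rw [add_one_mul]; exact ENNReal.ofReal_add_le
      _ ≤ μH[1] (circ '' Icc a (a + n * h)) + μH[1] (circ '' Icc (a + n * h) (a + n * h + h)) :=
          add_le_add (ih hnh) (sub_cube_le_hausdorffMeasure_circ_image_Icc _ hh)
      _ = μH[1] (circ '' Icc a (a + (n + 1) * h)) := by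
          rw [hausdorffMeasure_circ_image_Icc_add
            (le_add_of_nonneg_right (mul_nonneg n.cast_nonneg hh)) (by linarith) (by linarith)]
          ring_nf

lemma hausdorffMeasure_circ_image_Icc {a b : ℝ} (hab : a ≤ b) (hba : b - a < 2 * π) :
    μH[1] (circ '' Icc a b) = ENNReal.ofReal (b - a) := by
  refine le_antisymm ?_ ?_
  · calc μH[1] (circ '' Icc a b) ≤ μH[1] (Icc a b) := by
          simpa using lipschitzWith_circ.hausdorffMeasure_image_le zero_le_one (Icc a b)
      _ = ENNReal.ofReal (b - a) := by rw [hausdorffMeasure_real, volume_Icc]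
  set L := b - a
  have hL : 0 ≤ L := sub_nonneg.2 hab
  have hlim : Filter.Tendsto
      (fun n : ℕ => ENNReal.ofReal (L - L ^ 3 / 24 * (1 / ((n : ℝ) + 1)) ^ 2))
      Filter.atTop (nhds (ENNReal.ofReal L)) := by
    refine ENNReal.tendsto_ofReal ?_
    simpa using ((tendsto_one_div_add_atTop_nhds_zero_nat (𝕜 := ℝ)).pow 2).const_mul (L ^ 3 / 24)
      |>.const_sub L
  refine le_of_tendsto' hlim fun n => ?_
  have hn : (0 : ℝ) < n + 1 := by positivity
  have key := nat_mul_sub_cube_le_hausdorffMeasure_circ_image_Icc a (div_nonneg hL hn.le) (n + 1)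
  push_cast at key
  rw [mul_div_cancel₀ _ hn.ne', add_sub_cancel] at key
  refine le_of_eq_of_le (congrArg ENNReal.ofReal ?_) (key hba)
  field_simp

lemma hausdorffMeasure_circ_image_of_Ioo_subset {a b : ℝ} {s : Set ℝ} (hab : a ≤ b)
    (hba : b - a < 2 * π) (hs : Ioo a b ⊆ s) (hs' : s ⊆ Icc a b) :
    μH[1] (circ '' s) = ENNReal.ofReal (b - a) := by
  have := Measure.nullSingletonClass_hausdorff (EuclideanSpace ℝ (Fin 2)) one_pos
  refine le_antisymm ((measure_mono (image_mono hs')).trans_eq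
    (hausdorffMeasure_circ_image_Icc hab hba)) ?_
  rw [← hausdorffMeasure_circ_image_Icc hab hba,
    ← measure_sdiff_null (((finite_singleton (circ b)).insert (circ a)).measure_zero _)]
  refine measure_mono ?_
  rintro _ ⟨⟨θ, hθ, rfl⟩, hne⟩
  refine ⟨θ, hs ⟨hθ.1.lt_of_ne ?_, hθ.2.lt_of_ne ?_⟩, rfl⟩ <;> rintro rfl <;> simp at hne

lemma setOf_forall_inner_circ_nonpos {α β : ℝ} (hαβ : α ≤ β) (hβα : β - α ≤ π) :
    {u | ‖u‖ = 1 ∧ ∀ θ ∈ Icc α β, ⟪u, circ θ⟫ ≤ 0} = circ '' Icc (β + π / 2) (α + 3 * π / 2) := by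
  ext u
  constructor
  · rintro ⟨hu, hpolar⟩
    obtain ⟨φ₀, rfl⟩ : u ∈ range circ := by rw [range_circ]; simpa using hu
    obtain ⟨φ, hφ, hφφ₀⟩ := periodic_circ.exists_mem_Ico two_pi_pos φ₀ (β + π / 2)
    refine ⟨φ, ⟨hφ.1, not_lt.1 fun hlt => ?_⟩, hφφ₀.symm⟩
    -- `φ - 2π` clamped to `[α, β]` stays within `π / 2` of `φ - 2π`
    set θ := max α (min β (φ - 2 * π))
    have hθ : θ ∈ Icc α β := ⟨le_max_left _ _, max_le hαβ (min_le_left _ _)⟩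
    have hacute : φ - 2 * π - θ ∈ Ioo (-(π / 2)) (π / 2) := by
      obtain ⟨h₁, h₂⟩ := hφ
      constructor <;> rcases max_cases α (min β (φ - 2 * π)) with h | h <;>
        rcases min_cases β (φ - 2 * π) with h' | h' <;> linarith
    have := hpolar θ hθ
    rw [hφφ₀, inner_circ_circ, ← cos_sub_two_pi, sub_right_comm] at this
    exact (cos_pos_of_mem_Ioo hacute).not_ge this
  · rintro ⟨φ, hφ, rfl⟩
    refine ⟨norm_circ φ, fun θ hθ => ?_⟩
    rw [inner_circ_circ]
    exact cos_nonpos_of_pi_div_two_le_of_le (by linarith [hφ.1, hθ.2]) (by linarith [hφ.2, hθ.1])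

lemma setOf_inner_circ_nonpos (ψ : ℝ) :
    {u | ‖u‖ = 1 ∧ ⟪u, circ ψ⟫ ≤ 0} = circ '' Icc (ψ + π / 2) (ψ + 3 * π / 2) := by
  simpa using setOf_forall_inner_circ_nonpos le_rfl (by simpa using pi_pos.le)

lemma hausdorffMeasure_circ_image_add_polar {T : Set ℝ} {a b : ℝ} (hne : T.Nonempty)
    (hT : T.OrdConnected) (hTab : T ⊆ Icc a b) (hab : b - a ≤ π) :
    μH[1] (circ '' T) + μH[1] {u | ‖u‖ = 1 ∧ ∀ v ∈ circ '' T, ⟪u, v⟫ ≤ 0} =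
      ENNReal.ofReal π := by
  have hbdd : BddBelow T := ⟨a, fun θ hθ => (hTab hθ).1⟩
  have hbdd' : BddAbove T := ⟨b, fun θ hθ => (hTab hθ).2⟩
  set α := sInf T
  set β := sSup T
  have hαβ : α ≤ β := csInf_le_csSup hne hbdd hbdd'
  have hβα : β - α ≤ π := by
    linarith [le_csInf hne fun θ hθ => (hTab hθ).1, csSup_le hne fun θ hθ => (hTab hθ).2]
  have hIcc : T ⊆ Icc α β := subset_Icc_csInf_csSup hbdd hbdd'
  have hclosure : Icc α β ⊆ closure T :=
    (isPreconnected_iff_ordConnected.1 hT.isPreconnected.closure).out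
      (csInf_mem_closure hne hbdd) (csSup_mem_closure hne hbdd')
  have hpolar : {u | ‖u‖ = 1 ∧ ∀ v ∈ circ '' T, ⟪u, v⟫ ≤ 0} =
      {u | ‖u‖ = 1 ∧ ∀ θ ∈ Icc α β, ⟪u, circ θ⟫ ≤ 0} := by
    ext u
    refine and_congr_right fun _ =>
      forall_mem_image.trans ⟨fun h => ?_, fun h θ hθ => h θ (hIcc hθ)⟩
    have hclosed : IsClosed {θ | ⟪u, circ θ⟫ ≤ 0} :=
      isClosed_le (continuous_const.inner lipschitzWith_circ.continuous) continuous_const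
    exact fun θ hθ => hclosed.closure_subset_iff.2 h (hclosure hθ)
  have hIoo : Ioo α β ⊆ T := IsConnected.Ioo_csInf_csSup_subset ⟨hne, hT.isPreconnected⟩ hbdd hbdd'
  rw [hpolar, setOf_forall_inner_circ_nonpos hαβ hβα,
    hausdorffMeasure_circ_image_of_Ioo_subset hαβ (by linarith [pi_pos]) hIoo hIcc,
    hausdorffMeasure_circ_image_Icc (by linarith) (by linarith [pi_pos]),
    ← ENNReal.ofReal_add (by linarith) (by linarith)]
  ring_nf

lemma Convex.exists_unit_inner_sub_nonpos_of_notMem_interior {E : Type*} [NormedAddCommGroup E]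
    [InnerProductSpace ℝ E] [CompleteSpace E] {C : Set E} (hC : Convex ℝ C)
    (hint : (interior C).Nonempty) {p : E} (hp : p ∉ interior C) :
    ∃ n : E, ‖n‖ = 1 ∧ (∀ x ∈ C, ⟪n, x - p⟫ ≤ 0) ∧ ∀ x ∈ interior C, ⟪n, x - p⟫ < 0 := by
  obtain ⟨f, hf⟩ := geometric_hahn_banach_open_point hC.interior isOpen_interior hp
  set v := (InnerProductSpace.toDual ℝ E).symm f
  have hv : ∀ x, ⟪v, x - p⟫ = f x - f p := fun x => by
    rw [inner_sub_right, InnerProductSpace.toDual_symm_apply, InnerProductSpace.toDual_symm_apply]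
  have hvint : ∀ x ∈ interior C, ⟪v, x - p⟫ < 0 := fun x hx => by
    rw [hv]; linarith [hf x hx]
  have hvC : ∀ x ∈ C, ⟪v, x - p⟫ ≤ 0 := by
    have hclosed : IsClosed {x | ⟪v, x - p⟫ ≤ 0} :=
      isClosed_le (continuous_const.inner (continuous_id.sub continuous_const)) continuous_const
    intro x hx
    refine hclosed.closure_subset_iff.2 (fun y hy => (hvint y hy).le) ?_
    rw [hC.closure_interior_eq_closure_of_nonempty_interior hint]
    exact subset_closure hx
  have hv0 : v ≠ 0 := by
    rintro hv0
    obtain ⟨w, hw⟩ := hint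
    simpa [hv0] using hvint w hw
  have hpos : 0 < ‖v‖⁻¹ := inv_pos.2 (norm_pos_iff.2 hv0)
  refine ⟨‖v‖⁻¹ • v, norm_smul_inv_norm hv0, fun x hx => ?_, fun x hx => ?_⟩
  · rw [real_inner_smul_left]; exact mul_nonpos_of_nonneg_of_nonpos hpos.le (hvC x hx)
  · rw [real_inner_smul_left]; exact mul_neg_of_pos_of_neg hpos (hvint x hx)

section RadialCone

variable {E : Type*} [AddCommGroup E] [Module ℝ E]

def radialCone (C : Set E) (p : E) : Set E := {v | ∃ t : ℝ, 0 < t ∧ p + t • v ∈ C}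

lemma smul_mem_radialCone {C : Set E} {p v : E} {c : ℝ} (hc : 0 < c) (hv : v ∈ radialCone C p) :
    c • v ∈ radialCone C p := by
  obtain ⟨t, ht, hmem⟩ := hv
  exact ⟨t / c, div_pos ht hc, by rwa [smul_smul, div_mul_cancel₀ _ hc.ne']⟩

lemma Convex.add_mem_radialCone {C : Set E} (hC : Convex ℝ C) {p u v : E}
    (hu : u ∈ radialCone C p) (hv : v ∈ radialCone C p) : u + v ∈ radialCone C p := by
  obtain ⟨s, hs, hsu⟩ := hu
  obtain ⟨t, ht, htv⟩ := hv
  -- the point `p + (s t / (s + t)) • (u + v)` lies on the segment from `p + s • u` to `p + t • v`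
  refine ⟨s * t / (s + t), by positivity, ?_⟩
  have hsum : t / (s + t) + s / (s + t) = 1 := by
    rw [← add_div, add_comm t, div_self (add_pos hs ht).ne']
  convert hC hsu htv (by positivity) (by positivity) hsum using 1
  linear_combination (norm := module) hsum.symm • p

end RadialCone

lemma sin_sub_smul_circ (φ₁ φ φ₂ : ℝ) :
    sin (φ₂ - φ₁) • circ φ = sin (φ₂ - φ) • circ φ₁ + sin (φ - φ₁) • circ φ₂ := by
  ext i
  fin_cases i <;>
  simp only [circ, sin_sub, PiLp.smul_apply, PiLp.add_apply, smul_eq_mul, Fin.isValue,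
    Fin.zero_eta, Fin.mk_one, Matrix.cons_val_zero, Matrix.cons_val_one,
    Matrix.cons_val_fin_one] <;>
  ring

lemma Convex.circ_mem_radialCone {C : Set (EuclideanSpace ℝ (Fin 2))} (hC : Convex ℝ C)
    {p : EuclideanSpace ℝ (Fin 2)} {φ₁ φ φ₂ : ℝ} (hφ : φ ∈ Icc φ₁ φ₂) (hπ : φ₂ - φ₁ < π)
    (h₁ : circ φ₁ ∈ radialCone C p) (h₂ : circ φ₂ ∈ radialCone C p) :
    circ φ ∈ radialCone C p := by
  rcases hφ.1.eq_or_lt with rfl | hlt₁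
  · exact h₁
  rcases hφ.2.eq_or_lt with rfl | hlt₂
  · exact h₂
  have hD := sin_pos_of_pos_of_lt_pi (by linarith) hπ
  rw [← inv_smul_smul₀ hD.ne' (circ φ), sin_sub_smul_circ φ₁ φ φ₂]
  exact smul_mem_radialCone (inv_pos.2 hD) (hC.add_mem_radialCone
    (smul_mem_radialCone (sin_pos_of_pos_of_lt_pi (by linarith) (by linarith)) h₁)
    (smul_mem_radialCone (sin_pos_of_pos_of_lt_pi (by linarith) (by linarith)) h₂))

lemma Convex.ordConnected_setOf_circ_mem_radialCone {C : Set (EuclideanSpace ℝ (Fin 2))}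
    (hC : Convex ℝ C) {p : EuclideanSpace ℝ (Fin 2)} {a b θ₀ : ℝ} (hab : b - a ≤ π)
    (hθ₀ : θ₀ ∈ Ioo a b) (h₀ : circ θ₀ ∈ radialCone C p) :
    {θ ∈ Icc a b | circ θ ∈ radialCone C p}.OrdConnected := by
  refine ⟨fun θ₁ h₁ θ₂ h₂ θ hθ => ⟨⟨h₁.1.1.trans hθ.1, hθ.2.trans h₂.1.2⟩, ?_⟩⟩
  rcases le_total θ θ₀ with h | h
  · exact hC.circ_mem_radialCone ⟨hθ.1, h⟩ (by linarith [h₁.1.1, hθ₀.2]) h₁.2 h₀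
  · exact hC.circ_mem_radialCone ⟨h, hθ.2⟩ (by linarith [h₂.1.2, hθ₀.1]) h₀ h₂.2

lemma internalAngleSet_eq_circ_image {C : Set (EuclideanSpace ℝ (Fin 2))}
    {p : EuclideanSpace ℝ (Fin 2)} {ψ : ℝ} (hψ : ∀ x ∈ C, ⟪circ ψ, x - p⟫ ≤ 0) :
    internalAngleSet C p =
      circ '' {θ ∈ Icc (ψ + π / 2) (ψ + 3 * π / 2) | circ θ ∈ radialCone C p} := by
  ext u
  constructor
  · rintro ⟨hu, hcone⟩
    obtain ⟨t, ht, hmem⟩ := hcone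
    have hut : ⟪u, circ ψ⟫ ≤ 0 := by
      have := hψ _ hmem
      rw [add_sub_cancel_left, real_inner_smul_right, real_inner_comm] at this
      exact nonpos_of_mul_nonpos_right this ht
    obtain ⟨θ, hθ, rfl⟩ : u ∈ circ '' Icc (ψ + π / 2) (ψ + 3 * π / 2) := by
      rw [← setOf_inner_circ_nonpos]; exact ⟨hu, hut⟩
    exact ⟨θ, ⟨hθ, t, ht, hmem⟩, rfl⟩
  · rintro ⟨θ, ⟨-, hθ⟩, rfl⟩
    exact ⟨norm_circ θ, hθ⟩

lemma exists_mem_Ioo_circ_mem_radialCone {C : Set (EuclideanSpace ℝ (Fin 2))}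
    {p w : EuclideanSpace ℝ (Fin 2)} {ψ : ℝ} (hw : w ∈ C) (hwψ : ⟪circ ψ, w - p⟫ < 0) :
    ∃ θ ∈ Ioo (ψ + π / 2) (ψ + 3 * π / 2), circ θ ∈ radialCone C p := by
  have hwp : w - p ≠ 0 := by rintro h; simp [h] at hwψ
  have hpos : 0 < ‖w - p‖⁻¹ := inv_pos.2 (norm_pos_iff.2 hwp)
  have hneg : ⟪‖w - p‖⁻¹ • (w - p), circ ψ⟫ < 0 := by
    rw [real_inner_smul_left, real_inner_comm]; exact mul_neg_of_pos_of_neg hpos hwψ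
  obtain ⟨θ, hθ, hθu⟩ : ‖w - p‖⁻¹ • (w - p) ∈ circ '' Icc (ψ + π / 2) (ψ + 3 * π / 2) := by
    rw [← setOf_inner_circ_nonpos]; exact ⟨norm_smul_inv_norm hwp, hneg.le⟩
  rw [← hθu, inner_circ_circ] at hneg
  refine ⟨θ, ⟨hθ.1.lt_of_ne ?_, hθ.2.lt_of_ne ?_⟩, ?_⟩
  · rintro rfl; simp at hneg
  · rintro rfl
    rw [show ψ + 3 * π / 2 - ψ = π / 2 + π by ring, cos_add_pi, cos_pi_div_two] at hneg
    simp at hneg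
  · rw [hθu]
    exact smul_mem_radialCone hpos ⟨1, one_pos, by rwa [one_smul, add_sub_cancel]⟩

lemma externalAngleSet_eq_polar (C : Set (EuclideanSpace ℝ (Fin 2)))
    (p : EuclideanSpace ℝ (Fin 2)) :
    externalAngleSet C p = {u | ‖u‖ = 1 ∧ ∀ v ∈ internalAngleSet C p, ⟪u, v⟫ ≤ 0} := by
  ext u
  refine and_congr_right fun _ => ⟨fun hu v ⟨_, t, ht, hmem⟩ => ?_, fun hu x hx => ?_⟩
  · have := hu _ hmem
    rw [add_sub_cancel_left, real_inner_smul_right] at this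
    exact nonpos_of_mul_nonpos_right this ht
  · rcases eq_or_ne x p with rfl | hxp
    · simp
    have hxp' : x - p ≠ 0 := sub_ne_zero.2 hxp
    have hdir : ‖x - p‖⁻¹ • (x - p) ∈ internalAngleSet C p :=
      ⟨norm_smul_inv_norm hxp', ‖x - p‖, norm_pos_iff.2 hxp', by
        rwa [smul_inv_smul₀ (norm_ne_zero_iff.2 hxp'), add_sub_cancel]⟩
    have := hu _ hdir
    rw [real_inner_smul_right] at this
    exact nonpos_of_mul_nonpos_right this (inv_pos.2 (norm_pos_iff.2 hxp'))

theorem internal_add_external_angle_eq_pi_general (C : Set (EuclideanSpace ℝ (Fin 2)))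
    (hC : Convex ℝ C) (hint : (interior C).Nonempty)
    (p : EuclideanSpace ℝ (Fin 2)) (hbd : p ∉ interior C) :
    μH[1] (internalAngleSet C p) + μH[1] (externalAngleSet C p)
      = ENNReal.ofReal Real.pi := by
  obtain ⟨w, hw⟩ := hint
  obtain ⟨n, hn, hnC, hnint⟩ := hC.exists_unit_inner_sub_nonpos_of_notMem_interior ⟨w, hw⟩ hbd
  obtain ⟨ψ, rfl⟩ : n ∈ range circ := by rw [range_circ]; simpa using hn
  obtain ⟨θ₀, hθ₀, hθ₀C⟩ := exists_mem_Ioo_circ_mem_radialCone (interior_subset hw) (hnint w hw)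
  rw [externalAngleSet_eq_polar, internalAngleSet_eq_circ_image hnC]
  exact hausdorffMeasure_circ_image_add_polar ⟨θ₀, Ioo_subset_Icc_self hθ₀, hθ₀C⟩
    (hC.ordConnected_setOf_circ_mem_radialCone (by linarith) hθ₀ hθ₀C) (fun θ hθ => hθ.1)
    (by linarith)

/-- For a planar convex set `C` with nonempty interior and a boundary point
`p ∈ C \ interior C`, the internal and external angles of `C` at `p` sum to `π`
(as 1-dimensional Hausdorff measures on the unit circle). -/
theorem internal_add_external_angle_eq_pi (C : Set (EuclideanSpace ℝ (Fin 2)))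
    (hC : Convex ℝ C) (hint : (interior C).Nonempty)
    (p : EuclideanSpace ℝ (Fin 2)) (hp : p ∈ C) (hbd : p ∉ interior C) :
    μH[1] (internalAngleSet C p) + μH[1] (externalAngleSet C p)
      = ENNReal.ofReal Real.pi :=
  internal_add_external_angle_eq_pi_general C hC hint p hbd
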